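/- Every neutralizable Dyck picture is a Dyck crossword: DN₁ ⊆ DC₁, i.e., if a picture over {a,b,c,d} can be fully neutralized then all its rows are Dyck words for pairs [a,b],[c,d] and all its columns are Dyck words for pairs [a,c],[b,d]. -/

import Mathlib

/-- The alphabet Δ₁ = {a, b, c, d}. -/
inductive Del : Type
  | a | b | c | d
deriving DecidableEq

/-- Row cancellation: pairs [a,b] and [c,d]. -/
def rowStep (w w' : List Del) : Prop :=
  ∃ (u v : List Del),
    (w = u ++ [Del.a, Del.b] ++ v ∨ w = u ++ [Del.c, Del.d] ++ v) ∧ w' = u ++ v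

/-- The row Dyck language D^Row. -/
def DRow (w : List Del) : Prop := Relation.ReflTransGen rowStep w []

/-- Column cancellation: pairs [a,c] and [b,d]. -/
def colStep (w w' : List Del) : Prop :=
  ∃ (u v : List Del),
    (w = u ++ [Del.a, Del.c] ++ v ∨ w = u ++ [Del.b, Del.d] ++ v) ∧ w' = u ++ v

/-- The column Dyck language D^Col. -/
def DCol (w : List Del) : Prop := Relation.ReflTransGen colStep w []

/-- Row i (of length n) of a picture. -/
def row (p : ℕ → ℕ → Del) (n i : ℕ) : List Del := (List.range n).map (p i)

/-- Column j (of length m) of a picture. -/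
def col (p : ℕ → ℕ → Del) (m j : ℕ) : List Del :=
  (List.range m).map (fun i => p i j)

/-- The Dyck crossword language DC₁: nonempty pictures all of whose rows
are in D^Row and all of whose columns are in D^Col. -/
def DC (m n : ℕ) (p : ℕ → ℕ → Del) : Prop :=
  1 ≤ m ∧ 1 ≤ n ∧ (∀ i < m, DRow (row p n i)) ∧ (∀ j < n, DCol (col p m j))

/-- The alphabet Δ₁ ∪ {N}. -/
inductive DelN : Type
  | a | b | c | d | N
deriving DecidableEq

def embed : Del → DelN
  | Del.a => DelN.a
  | Del.b => DelN.b
  | Del.c => DelN.c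
  | Del.d => DelN.d

/-- One neutralization step inside an m×n picture: a subpicture of size at
least 2×2 whose four corners are a, b, c, d and whose remaining cells are
all N is replaced by an all-N subpicture. -/
def nstep (m n : ℕ) (q q' : ℕ → ℕ → DelN) : Prop :=
  ∃ (i j i' j' : ℕ), i < i' ∧ j < j' ∧ i' < m ∧ j' < n ∧
    q i j = DelN.a ∧ q i j' = DelN.b ∧ q i' j = DelN.c ∧ q i' j' = DelN.d ∧
    (∀ r s, i ≤ r → r ≤ i' → j ≤ s → s ≤ j' →
      ¬((r = i ∨ r = i') ∧ (s = j ∨ s = j')) → q r s = DelN.N) ∧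
    (∀ r s, (i ≤ r ∧ r ≤ i' ∧ j ≤ s ∧ s ≤ j') → q' r s = DelN.N) ∧
    (∀ r s, ¬(i ≤ r ∧ r ≤ i' ∧ j ≤ s ∧ s ≤ j') → q' r s = q r s)

/-- The neutralizable Dyck language DN₁: nonempty pictures over Δ₁ that can
be transformed into the all-N picture by neutralization steps. -/
def DN (m n : ℕ) (p : ℕ → ℕ → Del) : Prop :=
  1 ≤ m ∧ 1 ≤ n ∧
    ∃ q : ℕ → ℕ → DelN,
      Relation.ReflTransGen (nstep m n) (fun r s => embed (p r s)) q ∧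
      ∀ r < m, ∀ s < n, q r s = DelN.N

/-!
A neutralization step erases, from each of the two rows through its corners, an adjacent pair
`a b` resp. `c d` once the cells equal to `N` are ignored, and likewise from each of the two
columns an adjacent pair `a c` resp. `b d`; every other line keeps the same letters. Hence the
property "every row, read without its `N`s, is a row-Dyck word, and every column a column-Dyck
word" propagates backwards along a neutralization, from the all-`N` picture, where all these
words are empty, to the original picture.
-/

theorem List.range_eq_split {n j j' : ℕ} (hjj' : j < j') (hj'n : j' < n) :
    List.range n = List.range j ++ j :: List.range' (j + 1) (j' - j - 1) ++
      j' :: List.range' (j' + 1) (n - j' - 1) := by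
  obtain ⟨k, rfl⟩ : ∃ k, j' = j + 1 + k := ⟨j' - j - 1, by omega⟩
  obtain ⟨t, rfl⟩ : ∃ t, n = j + 1 + k + 1 + t := ⟨n - (j + 1 + k) - 1, by omega⟩
  rw [show j + 1 + k - j - 1 = k by omega, show j + 1 + k + 1 + t - (j + 1 + k) - 1 = t by omega,
    List.range_eq_range', List.range_eq_range', show j + 1 + k + 1 + t = j + (1 + k + 1 + t) by omega]
  simp [← List.range'_append, List.range'_succ, add_assoc]

def DelN.unembed : DelN → Option Del
  | .a => some .a
  | .b => some .b
  | .c => some .c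
  | .d => some .d
  | .N => none

@[simp] theorem DelN.unembed_embed (x : Del) : (embed x).unembed = some x := by
  cases x <;> rfl

@[simp] theorem DelN.unembed_N : DelN.N.unembed = none := rfl

def strip (f : ℕ → DelN) (n : ℕ) : List Del :=
  (List.range n).filterMap (DelN.unembed ∘ f)

theorem strip_embed (w : ℕ → Del) (n : ℕ) :
    strip (fun s => embed (w s)) n = (List.range n).map w := by
  rw [strip, ← List.filterMap_eq_map]
  congr 1
  funext s
  simp

theorem strip_eq_nil {f : ℕ → DelN} {n : ℕ} (hf : ∀ s < n, f s = .N) : strip f n = [] :=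
  List.filterMap_eq_nil_iff.2 fun s hs => by simp [hf s (List.mem_range.1 hs)]

theorem strip_congr {f g : ℕ → DelN} {n : ℕ} (hfg : ∀ s < n, (f s).unembed = (g s).unembed) :
    strip f n = strip g n :=
  List.filterMap_congr fun s hs => hfg s (List.mem_range.1 hs)

theorem strip_neutralize {R : List Del → List Del → Prop} {x y : Del}
    (hR : ∀ u v, R (u ++ [x, y] ++ v) (u ++ v)) {f g : ℕ → DelN} {n j j' : ℕ}
    (hjj' : j < j') (hj'n : j' < n) (hfj : f j = embed x) (hfj' : f j' = embed y)
    (hf : ∀ s, j < s → s < j' → f s = .N) (hg : ∀ s, j ≤ s → s ≤ j' → g s = .N)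
    (hfg : ∀ s, s < j ∨ j' < s → g s = f s) :
    R (strip f n) (strip g n) := by
  have hmid : ∀ h : ℕ → DelN, (∀ s, j < s → s < j' → h s = .N) →
      (List.range' (j + 1) (j' - j - 1)).filterMap (fun s => (h s).unembed) = [] :=
    fun h hh => List.filterMap_eq_nil_iff.2 fun s hs => by
      rw [List.mem_range'_1] at hs
      simp [hh s (by omega) (by omega)]
  have hpre : (List.range j).filterMap (fun s => (g s).unembed) =
      (List.range j).filterMap (fun s => (f s).unembed) :=
    List.filterMap_congr fun s hs => by simp [hfg s (.inl (List.mem_range.1 hs))]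
  have hpost : (List.range' (j' + 1) (n - j' - 1)).filterMap (fun s => (g s).unembed) =
      (List.range' (j' + 1) (n - j' - 1)).filterMap (fun s => (f s).unembed) :=
    List.filterMap_congr fun s hs => by
      rw [List.mem_range'_1] at hs
      simp [hfg s (.inr (by omega))]
  simpa [strip, List.range_eq_split hjj' hj'n, hfj, hfj', hg j le_rfl hjj'.le,
    hg j' hjj'.le le_rfl, hmid f hf, hmid g fun s h₁ h₂ => hg s h₁.le h₂.le, hpre, hpost]
    using hR _ _

theorem rowStep_ab (u v : List Del) : rowStep (u ++ [.a, .b] ++ v) (u ++ v) :=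
  ⟨u, v, .inl rfl, rfl⟩

theorem rowStep_cd (u v : List Del) : rowStep (u ++ [.c, .d] ++ v) (u ++ v) :=
  ⟨u, v, .inr rfl, rfl⟩

theorem colStep_ac (u v : List Del) : colStep (u ++ [.a, .c] ++ v) (u ++ v) :=
  ⟨u, v, .inl rfl, rfl⟩

theorem colStep_bd (u v : List Del) : colStep (u ++ [.b, .d] ++ v) (u ++ v) :=
  ⟨u, v, .inr rfl, rfl⟩

section nstep

variable {m n : ℕ} {q q' : ℕ → ℕ → DelN}

theorem reflGen_rowStep_of_nstep (hq : nstep m n q q') (r : ℕ) :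
    Relation.ReflGen rowStep (strip (q r) n) (strip (q' r) n) := by
  obtain ⟨i, j, i', j', hii', hjj', -, hj'n, ha, hb, hc, hd, hqN, hq'N, hout⟩ := hq
  by_cases hri : r = i
  · subst hri
    exact .single <| strip_neutralize rowStep_ab hjj' hj'n ha hb
      (fun s h₁ h₂ => hqN r s le_rfl hii'.le h₁.le h₂.le (by omega))
      (fun s h₁ h₂ => hq'N r s ⟨le_rfl, hii'.le, h₁, h₂⟩) (fun s hs => hout r s (by omega))
  by_cases hri' : r = i'
  · subst hri'
    exact .single <| strip_neutralize rowStep_cd hjj' hj'n hc hd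
      (fun s h₁ h₂ => hqN r s hii'.le le_rfl h₁.le h₂.le (by omega))
      (fun s h₁ h₂ => hq'N r s ⟨hii'.le, le_rfl, h₁, h₂⟩) (fun s hs => hout r s (by omega))
  suffices hqq' : ∀ s, (q r s).unembed = (q' r s).unembed by rw [strip_congr fun s _ => hqq' s]
  intro s
  by_cases hin : i ≤ r ∧ r ≤ i' ∧ j ≤ s ∧ s ≤ j'
  · rw [hqN r s hin.1 hin.2.1 hin.2.2.1 hin.2.2.2 (by omega), hq'N r s hin]
  · rw [hout r s hin]

theorem reflGen_colStep_of_nstep (hq : nstep m n q q') (s : ℕ) :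
    Relation.ReflGen colStep (strip (q · s) m) (strip (q' · s) m) := by
  obtain ⟨i, j, i', j', hii', hjj', hi'm, -, ha, hb, hc, hd, hqN, hq'N, hout⟩ := hq
  by_cases hsj : s = j
  · subst hsj
    exact .single <| strip_neutralize colStep_ac hii' hi'm ha hc
      (fun r h₁ h₂ => hqN r s h₁.le h₂.le le_rfl hjj'.le (by omega))
      (fun r h₁ h₂ => hq'N r s ⟨h₁, h₂, le_rfl, hjj'.le⟩) (fun r hr => hout r s (by omega))
  by_cases hsj' : s = j'
  · subst hsj'
    exact .single <| strip_neutralize colStep_bd hii' hi'm hb hd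
      (fun r h₁ h₂ => hqN r s h₁.le h₂.le hjj'.le le_rfl (by omega))
      (fun r h₁ h₂ => hq'N r s ⟨h₁, h₂, hjj'.le, le_rfl⟩) (fun r hr => hout r s (by omega))
  suffices hqq' : ∀ r, (q r s).unembed = (q' r s).unembed by rw [strip_congr fun r _ => hqq' r]
  intro r
  by_cases hin : i ≤ r ∧ r ≤ i' ∧ j ≤ s ∧ s ≤ j'
  · rw [hqN r s hin.1 hin.2.1 hin.2.2.1 hin.2.2.2 (by omega), hq'N r s hin]
  · rw [hout r s hin]

def StripDyck (m n : ℕ) (q : ℕ → ℕ → DelN) : Prop :=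
  (∀ r < m, DRow (strip (q r) n)) ∧ ∀ s < n, DCol (strip (q · s) m)

theorem stripDyck_of_forall_eq_N (hq : ∀ r < m, ∀ s < n, q r s = .N) : StripDyck m n q :=
  ⟨fun r hr => by rw [DRow, strip_eq_nil (hq r hr)],
    fun s hs => by rw [DCol, strip_eq_nil fun r hr => hq r hr s hs]⟩

theorem StripDyck.of_nstep (hq : nstep m n q q') (h : StripDyck m n q') : StripDyck m n q :=
  ⟨fun r hr => (reflGen_rowStep_of_nstep hq r).to_reflTransGen.trans (h.1 r hr),
    fun s hs => (reflGen_colStep_of_nstep hq s).to_reflTransGen.trans (h.2 s hs)⟩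

end nstep

/-- Every neutralizable picture is a Dyck crossword: DN₁ ⊆ DC₁. -/
theorem DN_subset_DC (m n : ℕ) (p : ℕ → ℕ → Del) (h : DN m n p) :
    DC m n p := by
  obtain ⟨hm, hn, q, hred, hqN⟩ := h
  have hp : StripDyck m n fun r s => embed (p r s) :=
    hred.head_induction_on (stripDyck_of_forall_eq_N hqN) fun hstep _ hc => hc.of_nstep hstep
  refine ⟨hm, hn, fun i hi => ?_, fun j hj => ?_⟩
  · simpa only [row, strip_embed] using hp.1 i hi
  · simpa only [col, strip_embed] using hp.2 j hj
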